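/- arXiv:2210.02747 — 2 statements merged into one kernel-verified Lean document; each statement's English description precedes it below -/
import Mathlib

section
/- Let d ≥ 1, let f : [0,1] × ℝᵈ → ℝᵈ be a time-dependent drift vector field, g : [0,1] → ℝ a diffusion coefficient, and p : [0,1] × ℝᵈ → ℝ_{>0} a twice differentiable probability density path satisfying the Fokker–Planck equation ∂_t p_t(y) = −div_y(f_t(y) p_t(y)) + (g_t²/2) Δ p_t(y) for all t and y, where Δ is the Laplacian in y. Then the vector field w_t(y) = f_t(y) − (g_t²/2) ∇_y log p_t(y) satisfies the continuity equation with p_t: ∂_t p_t(y) + div_y(p_t(y) w_t(y)) = 0 for all t ∈ [0,1] and y ∈ ℝᵈ. -/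
/-! Since `p ∇ log p = ∇ p` wherever `p > 0`, the flux `p w` equals `p f - (g²/2) ∇ p`;
by linearity of the divergence the continuity equation for `w` is then exactly the
Fokker–Planck equation. -/

open MeasureTheory Set

noncomputable section

/-- The (spatial) divergence of a vector field on `ℝᵈ`: `div v x = ∑ i ∂vⁱ/∂xⁱ (x)`. -/
def divergence {d : ℕ} (v : EuclideanSpace ℝ (Fin d) → EuclideanSpace ℝ (Fin d))
    (x : EuclideanSpace ℝ (Fin d)) : ℝ :=
  ∑ i, fderiv ℝ v x (EuclideanSpace.single i 1) i

section Divergence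

variable {d : ℕ} {v w : EuclideanSpace ℝ (Fin d) → EuclideanSpace ℝ (Fin d)}
  {x : EuclideanSpace ℝ (Fin d)}

theorem divergence_sub (hv : DifferentiableAt ℝ v x) (hw : DifferentiableAt ℝ w x) :
    divergence (fun z => v z - w z) x = divergence v x - divergence w x := by
  simp only [divergence, fderiv_fun_sub hv hw, sub_apply, PiLp.sub_apply,
    Finset.sum_sub_distrib]

theorem divergence_const_smul (hv : DifferentiableAt ℝ v x) (c : ℝ) :
    divergence (fun z => c • v z) x = c * divergence v x := by
  simp only [divergence, fderiv_fun_const_smul hv, smul_apply,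
    PiLp.smul_apply, smul_eq_mul, Finset.mul_sum]

end Divergence

section Gradient

variable {F : Type*} [NormedAddCommGroup F] [InnerProductSpace ℝ F] [CompleteSpace F]
  {f : F → ℝ}

theorem ContDiff.differentiable_gradient {n : WithTop ℕ∞} (hf : ContDiff ℝ n f) (hn : 2 ≤ n) :
    Differentiable ℝ (gradient f) :=
  ((InnerProductSpace.toDual ℝ F).symm.contDiff.comp
    (hf.fderiv_right (m := 1) hn)).differentiable one_ne_zero

theorem smul_gradient_log {x : F} (hf : DifferentiableAt ℝ f x) (hx : f x ≠ 0) :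
    f x • gradient (fun z => Real.log (f z)) x = gradient f x := by
  have hlog : HasFDerivAt (fun z => Real.log (f z)) ((f x)⁻¹ • fderiv ℝ f x) x :=
    (Real.hasDerivAt_log hx).comp_hasFDerivAt x hf.hasFDerivAt
  rw [hlog.hasGradientAt.gradient, map_smul, smul_smul, mul_inv_cancel₀ hx, one_smul, gradient]

end Gradient

theorem fokker_planck_to_continuity_equation_general
    {d : ℕ}
    (f : ℝ → EuclideanSpace ℝ (Fin d) → EuclideanSpace ℝ (Fin d))
    (g : ℝ → ℝ)
    (p : ℝ → EuclideanSpace ℝ (Fin d) → ℝ)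
    -- `p` is a twice differentiable, everywhere-positive probability density path
    (hp_pos : ∀ t ∈ Icc (0:ℝ) 1, ∀ y, 0 < p t y)
    (hp_smooth : ∀ t ∈ Icc (0:ℝ) 1, ContDiff ℝ 2 (p t))
    -- the drift is differentiable in space
    (hf_diff : ∀ t ∈ Icc (0:ℝ) 1, Differentiable ℝ (f t))
    -- the Fokker–Planck equation
    (hFP : ∀ t ∈ Icc (0:ℝ) 1, ∀ y,
      deriv (fun s => p s y) t
        = -divergence (fun z => p t z • f t z) y
          + (g t ^ 2 / 2) * divergence (fun z => gradient (p t) z) y) :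
    ∀ t ∈ Icc (0:ℝ) 1, ∀ y,
      deriv (fun s => p s y) t
        + divergence
            (fun z => p t z •
              (f t z - (g t ^ 2 / 2) • gradient (fun z' => Real.log (p t z')) z)) y
        = 0 := by
  intro t ht y
  have hp_diff : Differentiable ℝ (p t) := (hp_smooth t ht).differentiable two_ne_zero
  have hgrad_diff : Differentiable ℝ (gradient (p t)) :=
    (hp_smooth t ht).differentiable_gradient le_rfl
  have hflux : (fun z => p t z •
        (f t z - (g t ^ 2 / 2) • gradient (fun z' => Real.log (p t z')) z))
      = fun z => p t z • f t z - (g t ^ 2 / 2) • gradient (p t) z := by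
    funext z
    rw [smul_sub, smul_comm (p t z) (g t ^ 2 / 2),
      smul_gradient_log (hp_diff z) (hp_pos t ht z).ne']
  have hdrift_diff : DifferentiableAt ℝ (fun z => p t z • f t z) y :=
    (hp_diff y).smul (hf_diff t ht y)
  have hdiffusion_diff : DifferentiableAt ℝ (fun z => (g t ^ 2 / 2) • gradient (p t) z) y :=
    (hgrad_diff y).const_smul (g t ^ 2 / 2)
  rw [hflux, divergence_sub hdrift_diff hdiffusion_diff, divergence_const_smul (hgrad_diff y),
    hFP t ht y]
  ring

/-- **From Fokker–Planck to the continuity equation:** if `p` satisfies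
`∂_t p_t(y) = −div(f_t(y) p_t(y)) + (g_t²/2) Δ p_t(y)` (with `Δ = div ∘ ∇` the Laplacian),
then the vector field `w_t(y) = f_t(y) − (g_t²/2) ∇ log p_t(y)` satisfies the continuity
equation with `p_t`. -/
theorem fokker_planck_to_continuity_equation
    {d : ℕ} (hd : 1 ≤ d)
    (f : ℝ → EuclideanSpace ℝ (Fin d) → EuclideanSpace ℝ (Fin d))
    (g : ℝ → ℝ)
    (p : ℝ → EuclideanSpace ℝ (Fin d) → ℝ)
    -- `p` is a twice differentiable, everywhere-positive probability density path
    (hp_pos : ∀ t ∈ Icc (0:ℝ) 1, ∀ y, 0 < p t y)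
    (hp_int : ∀ t ∈ Icc (0:ℝ) 1, ∫ y, p t y = 1)
    (hp_smooth : ∀ t ∈ Icc (0:ℝ) 1, ContDiff ℝ 2 (p t))
    -- the drift is differentiable in space
    (hf_diff : ∀ t ∈ Icc (0:ℝ) 1, Differentiable ℝ (f t))
    -- the Fokker–Planck equation
    (hFP : ∀ t ∈ Icc (0:ℝ) 1, ∀ y,
      deriv (fun s => p s y) t
        = -divergence (fun z => p t z • f t z) y
          + (g t ^ 2 / 2) * divergence (fun z => gradient (p t) z) y) :
    ∀ t ∈ Icc (0:ℝ) 1, ∀ y,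
      deriv (fun s => p s y) t
        + divergence
            (fun z => p t z •
              (f t z - (g t ^ 2 / 2) • gradient (fun z' => Real.log (p t z')) z)) y
        = 0 :=
  fokker_planck_to_continuity_equation_general f g p hp_pos hp_smooth hf_diff hFP

end
end

section
/- Let d ≥ 1, let p : [0,1] × ℝᵈ → ℝ_{>0} be a differentiable probability density path and v : [0,1] × ℝᵈ → ℝᵈ a differentiable time-dependent vector field satisfying the continuity equation ∂_t p_t(x) + div_x(p_t(x) v_t(x)) = 0 for all t and x, and let φ solve (d/dt) φ_t(x) = v_t(φ_t(x)) with φ₀(x) = x. Assume t ↦ div_x v_t(φ_t(x)) is integrable on [0,1]. Then for every x ∈ ℝᵈ, log p₁(φ₁(x)) − log p₀(x) = −∫₀¹ div_x v_t(φ_t(x)) dt. -/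
/-!
Along a trajectory `γ s = φ_s(x)` the chain rule gives `d/ds p_s(γ s) = ∂_t p + Dp · v`, and the
product rule `div (p v) = Dp · v + p div v` turns the continuity equation into
`d/ds p_s(γ s) = -p div v`. Hence `d/ds log p_s(γ s) = -div v_s(γ s)`, and the fundamental
theorem of calculus concludes.
-/

open Set

noncomputable section

open Function

section PartialDerivatives

variable {E F : Type*} [NormedAddCommGroup E] [NormedSpace ℝ E] [NormedAddCommGroup F]
  [NormedSpace ℝ F] {p : ℝ → E → F} {t : ℝ}

theorem DifferentiableAt.of_uncurry_right {y : E} (hp : DifferentiableAt ℝ (uncurry p) (t, y)) :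
    DifferentiableAt ℝ (p t) y :=
  (hp.hasFDerivAt.comp y (hasFDerivAt_prodMk_right t y)).differentiableAt

theorem hasDerivAt_uncurry_comp {γ : ℝ → E} {γ' : E}
    (hp : DifferentiableAt ℝ (uncurry p) (t, γ t)) (hγ : HasDerivAt γ γ' t) :
    HasDerivAt (fun s => p s (γ s)) (deriv (fun s => p s (γ t)) t + fderiv ℝ (p t) (γ t) γ') t := by
  set D := fderiv ℝ (uncurry p) (t, γ t)
  have h_time : HasDerivAt (fun s => p s (γ t)) (D (1, 0)) t :=
    (hp.hasFDerivAt.comp_hasDerivAt t ((hasDerivAt_id t).prodMk (hasDerivAt_const t (γ t))) :)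
  have h_space : HasFDerivAt (p t) (D.comp (ContinuousLinearMap.inr ℝ ℝ E)) (γ t) :=
    hp.hasFDerivAt.comp (γ t) (hasFDerivAt_prodMk_right t (γ t))
  have h_split : D (1, γ') = D (1, 0) + D (0, γ') := by
    rw [← map_add, Prod.mk_add_mk, add_zero, zero_add]
  rw [h_time.deriv, h_space.fderiv, ContinuousLinearMap.comp_apply,
    ContinuousLinearMap.inr_apply, ← h_split]
  exact hp.hasFDerivAt.comp_hasDerivAt t ((hasDerivAt_id t).prodMk hγ)

end PartialDerivatives

theorem ContinuousLinearMap.apply_eq_sum_euclideanSpace {ι : Type*} [Fintype ι] [DecidableEq ι]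
    (L : EuclideanSpace ℝ ι →L[ℝ] ℝ) (u : EuclideanSpace ℝ ι) :
    L u = ∑ i, L (EuclideanSpace.single i 1) * u i := by
  conv_lhs => rw [← (EuclideanSpace.basisFun ι ℝ).sum_repr u]
  simp [map_sum, mul_comm]

section Divergence

variable {d : ℕ}

theorem divergence_smul {f : EuclideanSpace ℝ (Fin d) → ℝ}
    {w : EuclideanSpace ℝ (Fin d) → EuclideanSpace ℝ (Fin d)} {x : EuclideanSpace ℝ (Fin d)}
    (hf : DifferentiableAt ℝ f x) (hw : DifferentiableAt ℝ w x) :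
    divergence (fun y => f y • w y) x = fderiv ℝ f x (w x) + f x * divergence w x := by
  simp only [divergence, fderiv_fun_smul hf hw, add_apply, smul_apply,
    ContinuousLinearMap.smulRight_apply, PiLp.add_apply, PiLp.smul_apply, smul_eq_mul,
    Finset.sum_add_distrib, Finset.mul_sum, (fderiv ℝ f x).apply_eq_sum_euclideanSpace (w x)]
  rw [add_comm]

variable {p : ℝ → EuclideanSpace ℝ (Fin d) → ℝ}
  {v : ℝ → EuclideanSpace ℝ (Fin d) → EuclideanSpace ℝ (Fin d)}
  {γ : ℝ → EuclideanSpace ℝ (Fin d)} {t : ℝ}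

theorem hasDerivAt_density_along_trajectory
    (hp : DifferentiableAt ℝ (uncurry p) (t, γ t)) (hv : DifferentiableAt ℝ (v t) (γ t))
    (hcont : deriv (fun s => p s (γ t)) t + divergence (fun y => p t y • v t y) (γ t) = 0)
    (hγ : HasDerivAt γ (v t (γ t)) t) :
    HasDerivAt (fun s => p s (γ s)) (-(p t (γ t) * divergence (v t) (γ t))) t := by
  rw [divergence_smul hp.of_uncurry_right hv] at hcont
  exact (hasDerivAt_uncurry_comp hp hγ).congr_deriv (by linarith)

theorem hasDerivAt_log_density_along_trajectory
    (hp : DifferentiableAt ℝ (uncurry p) (t, γ t)) (hv : DifferentiableAt ℝ (v t) (γ t))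
    (hcont : deriv (fun s => p s (γ t)) t + divergence (fun y => p t y • v t y) (γ t) = 0)
    (hγ : HasDerivAt γ (v t (γ t)) t) (hpos : p t (γ t) ≠ 0) :
    HasDerivAt (fun s => Real.log (p s (γ s))) (-divergence (v t) (γ t)) t := by
  convert (hasDerivAt_density_along_trajectory hp hv hcont hγ).log hpos using 1
  field_simp

end Divergence

theorem log_density_along_flow_general
    {d : ℕ}
    (p : ℝ → EuclideanSpace ℝ (Fin d) → ℝ)
    (v : ℝ → EuclideanSpace ℝ (Fin d) → EuclideanSpace ℝ (Fin d))
    (φ : ℝ → EuclideanSpace ℝ (Fin d) → EuclideanSpace ℝ (Fin d))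
    -- `p` is a differentiable, everywhere-positive probability density path
    (hp_pos : ∀ t ∈ Icc (0:ℝ) 1, ∀ x, 0 < p t x)
    (hp_diff : Differentiable ℝ (Function.uncurry p))
    -- `v` is a differentiable time-dependent vector field
    (hv_diff : Differentiable ℝ (Function.uncurry v))
    -- the continuity equation
    (hcont : ∀ t ∈ Icc (0:ℝ) 1, ∀ x,
      deriv (fun s => p s x) t + divergence (fun y => p t y • v t y) x = 0)
    -- `φ` is the flow of `v` starting at the identity
    (hφ0 : ∀ x, φ 0 x = x)
    (hφ : ∀ t ∈ Icc (0:ℝ) 1, ∀ x, HasDerivAt (fun s => φ s x) (v t (φ t x)) t)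
    -- integrability of the divergence along the flow
    (hInt : ∀ x, IntervalIntegrable
      (fun t => divergence (v t) (φ t x)) MeasureTheory.volume 0 1) :
    ∀ x, Real.log (p 1 (φ 1 x)) - Real.log (p 0 x)
      = -∫ t in (0:ℝ)..1, divergence (v t) (φ t x) := by
  intro x
  have hderiv : ∀ t ∈ uIcc (0:ℝ) 1, HasDerivAt (fun s => Real.log (p s (φ s x)))
      (-divergence (v t) (φ t x)) t := by
    intro t ht
    rw [uIcc_of_le zero_le_one] at ht
    exact hasDerivAt_log_density_along_trajectory (hp_diff _) (hv_diff _).of_uncurry_right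
      (hcont t ht _) (hφ t ht x) (hp_pos t ht _).ne'
  have hftc := intervalIntegral.integral_eq_sub_of_hasDerivAt hderiv (hInt x).neg
  rw [intervalIntegral.integral_neg, hφ0] at hftc
  exact hftc.symm

/-- **Integrated change of variables along the flow:** if `(p, v)` satisfies the
continuity equation and `φ` is the flow of `v` with `φ₀ = id`, and `t ↦ div v_t(φ_t(x))`
is integrable on `[0,1]`, then
`log p₁(φ₁(x)) − log p₀(x) = −∫₀¹ div v_t(φ_t(x)) dt`. -/
theorem log_density_along_flow
    {d : ℕ} (hd : 1 ≤ d)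
    (p : ℝ → EuclideanSpace ℝ (Fin d) → ℝ)
    (v : ℝ → EuclideanSpace ℝ (Fin d) → EuclideanSpace ℝ (Fin d))
    (φ : ℝ → EuclideanSpace ℝ (Fin d) → EuclideanSpace ℝ (Fin d))
    -- `p` is a differentiable, everywhere-positive probability density path
    (hp_pos : ∀ t ∈ Icc (0:ℝ) 1, ∀ x, 0 < p t x)
    (hp_int : ∀ t ∈ Icc (0:ℝ) 1, ∫ x, p t x = 1)
    (hp_diff : Differentiable ℝ (Function.uncurry p))
    -- `v` is a differentiable time-dependent vector field
    (hv_diff : Differentiable ℝ (Function.uncurry v))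
    -- the continuity equation
    (hcont : ∀ t ∈ Icc (0:ℝ) 1, ∀ x,
      deriv (fun s => p s x) t + divergence (fun y => p t y • v t y) x = 0)
    -- `φ` is the flow of `v` starting at the identity
    (hφ0 : ∀ x, φ 0 x = x)
    (hφ : ∀ t ∈ Icc (0:ℝ) 1, ∀ x, HasDerivAt (fun s => φ s x) (v t (φ t x)) t)
    -- integrability of the divergence along the flow
    (hInt : ∀ x, IntervalIntegrable
      (fun t => divergence (v t) (φ t x)) MeasureTheory.volume 0 1) :
    ∀ x, Real.log (p 1 (φ 1 x)) - Real.log (p 0 x)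
      = -∫ t in (0:ℝ)..1, divergence (v t) (φ t x) :=
  log_density_along_flow_general p v φ hp_pos hp_diff hv_diff hcont hφ0 hφ hInt

end
end
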